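/- arXiv:0805.0480 — 2 statements merged into one kernel-verified Lean document; each statement's English description precedes it below -/
import Mathlib

section
/- Let H be a finite connected graph with at least 3 vertices, let v be a vertex of degree 1 in H (a pendant vertex), and let H' be the graph obtained from H by deleting v and its unique incident edge. Then λ_RW(H') ≥ λ_RW(H), i.e., removing a pendant edge cannot decrease the smallest nonzero Laplacian eigenvalue. -/
/-! Let `G' := G.induce {u | u ≠ v}` and let `w` be the neighbour of `v`. An eigenvector `f` of
`G'.lapMatrix` for an eigenvalue `μ > 0` sums to zero. Extend it to `x : V → ℝ` by `x v := f w`: the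
pendant edge then contributes nothing, so `xᵀ L x = μ ‖f‖²`, while
`‖x‖² - (∑ x)² / |V| = ‖f‖² + f(w)² (1 - 1 / |V|) ≥ ‖f‖²`. The variational bound
`lapGap G * (‖x‖² - (∑ x)² / |V|) ≤ xᵀ L x` (expand `x` in an orthonormal eigenbasis; the kernel of
`L` consists of the constants since `G` is connected) gives `lapGap G ≤ μ`. With at least three
vertices `G'` still has an edge, hence a positive eigenvalue, so `lapGap G'` is not the junk value
`sInf ∅ = 0`. -/

open Finset Filter Real

noncomputable def lapGap {V : Type*} [Fintype V] [DecidableEq V] (G : SimpleGraph V) : ℝ :=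
  letI := Classical.decRel G.Adj
  sInf {μ : ℝ | 0 < μ ∧ ∃ f : V → ℝ, f ≠ 0 ∧ (G.lapMatrix ℝ).mulVec f = μ • f}

noncomputable def interchangeGen {V : Type*} [Fintype V] [DecidableEq V] (G : SimpleGraph V) :
    Matrix (Equiv.Perm V) (Equiv.Perm V) ℝ :=
  letI := Classical.decRel G.Adj
  fun σ τ =>
    if σ = τ then -((((Finset.univ : Finset (V × V)).filter (fun p => G.Adj p.1 p.2)).card : ℝ)) / 2
    else (((Finset.univ : Finset (V × V)).filter
      (fun p => G.Adj p.1 p.2 ∧ τ = σ * Equiv.swap p.1 p.2)).card : ℝ) / 2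

noncomputable def ipGap {V : Type*} [Fintype V] [DecidableEq V] (G : SimpleGraph V) : ℝ :=
  sInf {lam : ℝ | 0 < lam ∧ ∃ f : Equiv.Perm V → ℝ, f ≠ 0 ∧
    (interchangeGen G).mulVec f = (-lam) • f}

noncomputable def boxGraph (d L : ℕ) : SimpleGraph (Fin d → Fin (L + 1)) :=
  SimpleGraph.fromRel (fun x y => ∃ i, ((x i : ℕ) + 1 = y i ∨ (y i : ℕ) + 1 = x i) ∧
    ∀ j, j ≠ i → x j = y j)

open Matrix

theorem OrthonormalBasis.dotProduct_eq_sum {n : Type*} [Fintype n]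
    (b : OrthonormalBasis n ℝ (EuclideanSpace ℝ n)) (x y : n → ℝ) :
    x ⬝ᵥ y = ∑ i, (⇑(b i) ⬝ᵥ x) * (⇑(b i) ⬝ᵥ y) := by
  simpa [EuclideanSpace.inner_toLp_toLp, EuclideanSpace.inner_eq_star_dotProduct, dotProduct_comm]
    using (b.sum_inner_mul_inner (WithLp.toLp 2 x) (WithLp.toLp 2 y)).symm

theorem Matrix.IsHermitian.mul_dotProduct_self_le_dotProduct_mulVec {n : Type*} [Fintype n] [DecidableEq n]
    {A : Matrix n n ℝ} (hA : A.IsHermitian) {c : ℝ} {x : n → ℝ}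
    (hx : ∀ i, hA.eigenvalues i < c → ⇑(hA.eigenvectorBasis i) ⬝ᵥ x = 0) :
    c * (x ⬝ᵥ x) ≤ x ⬝ᵥ (A *ᵥ x) := by
  set b := hA.eigenvectorBasis
  have hcoord : ∀ i, ⇑(b i) ⬝ᵥ (A *ᵥ x) = hA.eigenvalues i * (⇑(b i) ⬝ᵥ x) := fun i => by
    rw [dotProduct_mulVec, ← mulVec_transpose, ← conjTranspose_eq_transpose_of_trivial, hA.eq,
      hA.mulVec_eigenvectorBasis, smul_dotProduct, smul_eq_mul]
  rw [b.dotProduct_eq_sum x x, b.dotProduct_eq_sum x (A *ᵥ x), Finset.mul_sum]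
  refine Finset.sum_le_sum fun i _ => ?_
  rw [hcoord]
  rcases lt_or_ge (hA.eigenvalues i) c with h | h
  · simp [hx i h]
  · linarith [mul_le_mul_of_nonneg_right h (mul_self_nonneg (⇑(b i) ⬝ᵥ x))]

namespace SimpleGraph

variable {V : Type*} [Fintype V] [DecidableEq V] (G : SimpleGraph V) [DecidableRel G.Adj]

theorem sum_lapMatrix_mulVec {R : Type*} [CommRing R] (x : V → R) :
    ∑ u, (G.lapMatrix R *ᵥ x) u = 0 :=
  calc ∑ u, (G.lapMatrix R *ᵥ x) u = (fun _ => 1) ⬝ᵥ (G.lapMatrix R *ᵥ x) := by simp [dotProduct]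
    _ = (G.lapMatrix R *ᵥ fun _ => 1) ⬝ᵥ x := by
      rw [dotProduct_mulVec, ← mulVec_transpose, (G.isSymm_lapMatrix (R := R)).eq]
    _ = 0 := by rw [lapMatrix_mulVec_const_eq_zero, zero_dotProduct]

theorem sum_eq_zero_of_lapMatrix_mulVec_eq_smul {R : Type*} [CommRing R] [NoZeroDivisors R]
    {μ : R} (hμ : μ ≠ 0) {x : V → R} (hx : G.lapMatrix R *ᵥ x = μ • x) : ∑ u, x u = 0 := by
  have h := G.sum_lapMatrix_mulVec x
  simp only [hx, Pi.smul_apply, smul_eq_mul, ← Finset.mul_sum] at h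
  exact (mul_eq_zero.mp h).resolve_left hμ

theorem dotProduct_lapMatrix_mulVec_sub_const {R : Type*} [CommRing R] (x : V → R) (m : R) :
    (x - fun _ => m) ⬝ᵥ (G.lapMatrix R *ᵥ (x - fun _ => m)) = x ⬝ᵥ (G.lapMatrix R *ᵥ x) := by
  have hconst : G.lapMatrix R *ᵥ (fun _ => m) = 0 := by
    rw [show (fun _ => m : V → R) = m • fun _ => 1 by ext; simp, mulVec_smul,
      lapMatrix_mulVec_const_eq_zero, smul_zero]
  have hmean : (fun _ => m) ⬝ᵥ (G.lapMatrix R *ᵥ x) = 0 := by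
    simp [dotProduct, ← Finset.mul_sum, sum_lapMatrix_mulVec]
  rw [mulVec_sub, hconst, sub_zero, sub_dotProduct, hmean, sub_zero]

end SimpleGraph

section LapGap

variable {V : Type*} [Fintype V] [DecidableEq V] (G : SimpleGraph V) [DecidableRel G.Adj]

def lapPosEigenvalues : Set ℝ :=
  {μ : ℝ | 0 < μ ∧ ∃ f : V → ℝ, f ≠ 0 ∧ G.lapMatrix ℝ *ᵥ f = μ • f}

theorem lapGap_eq_sInf : lapGap G = sInf (lapPosEigenvalues G) := by
  unfold lapGap lapPosEigenvalues
  congr!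

theorem lapGap_le {μ : ℝ} (hμ : μ ∈ lapPosEigenvalues G) : lapGap G ≤ μ := by
  rw [lapGap_eq_sInf]
  exact csInf_le ⟨0, fun _ h => h.1.le⟩ hμ

theorem lapGap_nonneg : 0 ≤ lapGap G := by
  rw [lapGap_eq_sInf]
  exact Real.sInf_nonneg fun _ h => h.1.le

theorem lapPosEigenvalues_nonempty {a b : V} (hab : G.Adj a b) :
    (lapPosEigenvalues G).Nonempty := by
  have hL := SimpleGraph.posSemidef_lapMatrix ℝ G
  have hne : G.lapMatrix ℝ ≠ 0 := by
    intro h0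
    have := (G.lapMatrix_mulVec_eq_zero_iff_forall_adj (x := Pi.single a 1)).mp
      (by rw [h0, zero_mulVec]) a b hab
    simp [hab.ne'] at this
  obtain ⟨i, hi⟩ := Function.ne_iff.mp (mt hL.isHermitian.eigenvalues_eq_zero_iff.mp hne)
  exact ⟨_, (hL.eigenvalues_nonneg i).lt_of_ne' hi, _,
    (WithLp.ofLp_eq_zero 2).ne.2 (hL.isHermitian.eigenvectorBasis.orthonormal.ne_zero i),
    hL.isHermitian.mulVec_eigenvectorBasis i⟩

theorem lapGap_mul_le_of_sum_eq_zero (hG : G.Connected) {x : V → ℝ} (hx : ∑ u, x u = 0) :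
    lapGap G * (x ⬝ᵥ x) ≤ x ⬝ᵥ (G.lapMatrix ℝ *ᵥ x) := by
  have hL := SimpleGraph.posSemidef_lapMatrix ℝ G
  refine hL.isHermitian.mul_dotProduct_self_le_dotProduct_mulVec fun i hi => ?_
  set b := hL.isHermitian.eigenvectorBasis
  have hzero : hL.isHermitian.eigenvalues i = 0 :=
    ((hL.eigenvalues_nonneg i).eq_or_lt.resolve_right fun hpos => hi.not_ge <|
      lapGap_le G ⟨hpos, _, (WithLp.ofLp_eq_zero 2).ne.2 (b.orthonormal.ne_zero i),
        hL.isHermitian.mulVec_eigenvectorBasis i⟩).symm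
  have hconst := G.lapMatrix_mulVec_eq_zero_iff_forall_reachable.mp
    (by rw [hL.isHermitian.mulVec_eigenvectorBasis i, hzero, zero_smul])
  obtain ⟨u₀⟩ := hG.nonempty
  calc ⇑(b i) ⬝ᵥ x = ∑ u, b i u₀ * x u :=
        Finset.sum_congr rfl fun u _ => by rw [hconst u u₀ (hG.preconnected u u₀)]
    _ = 0 := by rw [← Finset.mul_sum, hx, mul_zero]

theorem lapGap_mul_le (hG : G.Connected) (x : V → ℝ) :
    lapGap G * (x ⬝ᵥ x - (∑ u, x u) ^ 2 / Fintype.card V) ≤ x ⬝ᵥ (G.lapMatrix ℝ *ᵥ x) := by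
  have hN : (Fintype.card V : ℝ) ≠ 0 := by
    have := hG.nonempty
    exact_mod_cast Fintype.card_ne_zero
  set m := (∑ u, x u) / Fintype.card V
  set y : V → ℝ := x - fun _ => m with hy
  have hsum : ∑ u, y u = 0 := by
    simp [hy, Finset.sum_sub_distrib, m, mul_div_cancel₀ _ hN]
  have hnorm : y ⬝ᵥ y = x ⬝ᵥ x - (∑ u, x u) ^ 2 / Fintype.card V := by
    have hsq : ∀ u, (x u - m) * (x u - m) = x u * x u - 2 * m * x u + m ^ 2 := fun u => by ring
    simp only [hy, dotProduct, Pi.sub_apply, hsq, Finset.sum_add_distrib, Finset.sum_sub_distrib,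
      ← Finset.mul_sum, Finset.sum_const, Finset.card_univ, nsmul_eq_mul, m]
    field_simp
    ring
  rw [← hnorm, ← G.dotProduct_lapMatrix_mulVec_sub_const x m]
  exact lapGap_mul_le_of_sum_eq_zero G hG hsum

end LapGap

namespace SimpleGraph

variable {V : Type*} [Fintype V] [DecidableEq V] {G : SimpleGraph V} {v w : V}

theorem exists_adj_ne_of_pendant (hG : G.Connected) (hv : ∀ x, G.Adj v x ↔ x = w)
    (hcard : 3 ≤ Fintype.card V) : ∃ a b, a ≠ v ∧ b ≠ v ∧ G.Adj a b := by
  obtain ⟨a, -, ha⟩ := Finset.exists_mem_notMem_of_card_lt_card (s := {v, w}) (t := univ)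
    (by rw [card_univ]; exact card_le_two.trans_lt hcard)
  simp only [mem_insert, mem_singleton, not_or] at ha
  have := nontrivial_of_ne a v ha.1
  obtain ⟨b, hab⟩ := hG.preconnected.exists_adj_of_nontrivial a
  refine ⟨a, b, ha.1, ?_, hab⟩
  rintro rfl
  exact ha.2 ((hv a).mp hab.symm)

variable [DecidableRel G.Adj]

theorem dotProduct_lapMatrix_mulVec_induce_of_pendant (hv : ∀ x, G.Adj v x ↔ x = w)
    {x : V → ℝ} (hx : x v = x w) :
    (fun a : {u | u ≠ v} => x a) ⬝ᵥ ((G.induce {u | u ≠ v}).lapMatrix ℝ *ᵥ fun a => x a) =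
      x ⬝ᵥ (G.lapMatrix ℝ *ᵥ x) := by
  rw [← toLinearMap₂'_apply', ← toLinearMap₂'_apply', lapMatrix_toLinearMap₂',
    lapMatrix_toLinearMap₂']
  congr 1
  have hrow : ∀ j, (if G.Adj v j then (x v - x j) ^ 2 else 0) = 0 := fun j =>
    ite_eq_right_iff.mpr fun h => by simp [(hv j).mp h, hx]
  have hcol : ∀ i, (if G.Adj i v then (x i - x v) ^ 2 else 0) = 0 := fun i =>
    ite_eq_right_iff.mpr fun h => by simp [(hv i).mp h.symm, hx]
  rw [Fintype.sum_eq_add_sum_subtype_ne _ v, Finset.sum_eq_zero fun j _ => hrow j, zero_add]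
  refine Finset.sum_congr rfl fun i _ => ?_
  rw [Fintype.sum_eq_add_sum_subtype_ne _ v, hcol, zero_add]
  rfl

end SimpleGraph

section Pendant

variable {V : Type*} [Fintype V] [DecidableEq V] {G : SimpleGraph V} [DecidableRel G.Adj] {v w : V}

theorem lapGap_le_of_mem_lapPosEigenvalues_induce (hG : G.Connected)
    (hv : ∀ x, G.Adj v x ↔ x = w) {μ : ℝ}
    (hμ : μ ∈ lapPosEigenvalues (G.induce {u | u ≠ v})) : lapGap G ≤ μ := by
  obtain ⟨hμ, f, hf, heig⟩ := hμ
  have hwv : w ≠ v := ((hv w).mpr rfl).ne'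
  set x : V → ℝ := fun z => if h : z = v then f ⟨w, hwv⟩ else f ⟨z, h⟩
  have hxf : (fun a : {u | u ≠ v} => x a) = f := funext fun a => dif_neg a.2
  have hxv : x v = x w := by simp [x, hwv]
  have hsum : ∑ u, x u = x v := by
    rw [Fintype.sum_eq_add_sum_subtype_ne _ v, add_eq_left]
    exact (G.induce {u | u ≠ v}).sum_eq_zero_of_lapMatrix_mulVec_eq_smul hμ.ne' (hxf ▸ heig)
  have hnorm : x ⬝ᵥ x = x v ^ 2 + f ⬝ᵥ f := by
    rw [dotProduct, Fintype.sum_eq_add_sum_subtype_ne _ v, ← hxf, sq]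
    rfl
  have hN : (1 : ℝ) ≤ Fintype.card V := by
    have := hG.nonempty
    exact_mod_cast Fintype.card_pos
  have hf_pos : 0 < f ⬝ᵥ f := by
    simpa using dotProduct_star_self_pos_iff.mpr hf
  refine le_of_mul_le_mul_right ?_ hf_pos
  calc lapGap G * (f ⬝ᵥ f) ≤ lapGap G * (x ⬝ᵥ x - (∑ u, x u) ^ 2 / Fintype.card V) := by
        gcongr
        · exact lapGap_nonneg G
        · rw [hnorm, hsum]
          linarith [div_le_self (sq_nonneg (x v)) hN]
    _ ≤ x ⬝ᵥ (G.lapMatrix ℝ *ᵥ x) := lapGap_mul_le G hG x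
    _ = f ⬝ᵥ ((G.induce {u | u ≠ v}).lapMatrix ℝ *ᵥ f) := by
        rw [← G.dotProduct_lapMatrix_mulVec_induce_of_pendant hv hxv, hxf]
    _ = μ * (f ⬝ᵥ f) := by rw [heig, dotProduct_smul, smul_eq_mul]

end Pendant

theorem stmt8 {V : Type*} [Fintype V] [DecidableEq V] (G : SimpleGraph V)
    [DecidableRel G.Adj] (hG : G.Connected) (hcard : 3 ≤ Fintype.card V)
    (v : V) (hdeg : G.degree v = 1) :
    lapGap G ≤ lapGap (G.induce {u : V | u ≠ v}) := by
  obtain ⟨w, hw, huniq⟩ := G.degree_eq_one_iff_existsUnique_adj.mp hdeg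
  have hv : ∀ x, G.Adj v x ↔ x = w := fun x => ⟨huniq x, fun h => h ▸ hw⟩
  obtain ⟨a, b, ha, hb, hab⟩ := G.exists_adj_ne_of_pendant hG hv hcard
  have hab' : (G.induce {u | u ≠ v}).Adj ⟨a, ha⟩ ⟨b, hb⟩ := hab
  rw [lapGap_eq_sInf (G.induce {u | u ≠ v})]
  exact le_csInf (lapPosEigenvalues_nonempty _ hab') fun _ hμ =>
    lapGap_le_of_mem_lapPosEigenvalues_induce hG hv hμ
end

section
/- Let G be a connected graph on vertices {1,…,n} and let Q be the generator of the interchange process on G. Suppose f : S_n → ℝ satisfies Qf = -λf with λ > 0, and suppose there exist m, k with ∑_{π : π(m)=k} f(π) ≠ 0. Then λ is an eigenvalue of the graph Laplacian of G, and hence λ ≥ λ_RW(G). -/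
open Finset Filter Real

/-!
Summing `f` over the configurations in which position `j` holds particle `k` gives a function
`h` of `j` alone. An edge `(a b)` acts by `σ ↦ σ * swap a b`, moving only the contents of
positions `a` and `b`, so under this lumping the interchange generator becomes minus the graph
Laplacian (particle `k` alone performs a random walk). Hence `Q f = -λ f` gives `L h = λ h`,
and `h ≠ 0` by hypothesis.
-/

open Matrix

namespace SimpleGraph

variable {V : Type*} [Fintype V] [DecidableEq V] (G : SimpleGraph V) [DecidableRel G.Adj]

theorem sum_adj_swap_apply_sub_eq_lapMatrix_mulVec {R : Type*} [CommRing R] (h : V → R)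
    (j : V) :
    ∑ p : V × V with G.Adj p.1 p.2, (h (Equiv.swap p.1 p.2 j) - h j) =
      -2 * (G.lapMatrix R *ᵥ h) j := by
  set g : V → R := fun b => if G.Adj j b then h b - h j else 0
  -- each edge through `j` is counted once as `(j, b)` and once as `(b, j)`
  have hsplit : ∀ a b : V, (if G.Adj a b then h (Equiv.swap a b j) - h j else 0) =
      (if a = j then g b else 0) + (if b = j then g a else 0) := by
    intro a b
    by_cases hab : G.Adj a b
    · by_cases ha : a = j
      · subst ha; simp [g, hab]
      · by_cases hb : b = j
        · subst hb; simp [g, hab.symm, ha, hab]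
        · simp [g, hab, ha, hb, Equiv.swap_apply_of_ne_of_ne (Ne.symm ha) (Ne.symm hb)]
    · by_cases ha : a = j
      · subst ha; simp [g, hab]
      · by_cases hb : b = j
        · subst hb; simp [g, ha, G.adj_comm]
        · simp [hab, ha, hb]
  have hg : ∑ b, g b = ∑ b ∈ G.neighborFinset j, (h b - h j) := by
    rw [neighborFinset_eq_filter, Finset.sum_filter]
  rw [Finset.sum_filter, Fintype.sum_prod_type]
  simp only [hsplit, Finset.sum_add_distrib]
  rw [Finset.sum_comm (f := fun a b => if a = j then g b else 0)]
  simp only [Finset.sum_ite_eq', Finset.mem_univ, if_true]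
  rw [hg, lapMatrix_mulVec_apply, Finset.sum_sub_distrib, Finset.sum_const,
    card_neighborFinset_eq_degree, nsmul_eq_mul]
  ring

end SimpleGraph

section InterchangeProcess

variable {V : Type*} [Fintype V] [DecidableEq V] (G : SimpleGraph V) [DecidableRel G.Adj]

theorem interchangeGen_apply (σ τ : Equiv.Perm V) :
    interchangeGen G σ τ = (∑ p : V × V with G.Adj p.1 p.2,
      ((if σ * Equiv.swap p.1 p.2 = τ then 1 else 0) - if σ = τ then 1 else 0)) / 2 := by
  rw [interchangeGen, Subsingleton.elim (Classical.decRel G.Adj) ‹_›]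
  by_cases hστ : σ = τ
  · subst hστ
    have hswap : ∀ p ∈ ({p : V × V | G.Adj p.1 p.2} : Finset _), σ * Equiv.swap p.1 p.2 ≠ σ :=
      fun p hp => by simpa using (Finset.mem_filter.mp hp).2.ne
    rw [Finset.sum_congr rfl fun p hp => by rw [if_neg (hswap p hp), if_pos rfl]]
    simp
  · simp only [hστ, if_false, sub_zero, Finset.sum_boole, Finset.filter_filter, eq_comm]

theorem interchangeGen_mulVec_apply (f : Equiv.Perm V → ℝ) (σ : Equiv.Perm V) :
    (interchangeGen G *ᵥ f) σ =
      (∑ p : V × V with G.Adj p.1 p.2, (f (σ * Equiv.swap p.1 p.2) - f σ)) / 2 := by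
  simp only [mulVec, dotProduct, interchangeGen_apply, div_mul_eq_mul_div, ← Finset.sum_div,
    Finset.sum_mul, sub_mul, ite_mul, one_mul, zero_mul]
  rw [Finset.sum_comm]
  simp only [Finset.sum_sub_distrib, Finset.sum_ite_eq, Finset.mem_univ, if_true]

end InterchangeProcess

namespace Equiv.Perm

variable {V : Type*} [Fintype V] [DecidableEq V]

/-- `lump k f j` is the total weight of the configurations in which position `j` holds
particle `k`; as a function of `σ`, that position is `σ⁻¹ k`. -/
def lump (k : V) (f : Perm V → ℝ) (j : V) : ℝ :=
  ∑ σ ∈ univ.filter (fun σ : Perm V => σ j = k), f σ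

theorem lump_mul_swap (k a b j : V) (f : Perm V → ℝ) :
    lump k (fun σ => f (σ * swap a b)) j = lump k f (swap a b j) := by
  simp only [lump, Finset.sum_filter]
  exact Fintype.sum_equiv (Equiv.mulRight (swap a b)) _ _ fun σ => by simp

theorem lump_smul (k : V) (c : ℝ) (f : Perm V → ℝ) : lump k (c • f) = c • lump k f := by
  ext j
  simp [lump, Finset.mul_sum]

theorem lump_interchangeGen_mulVec (G : SimpleGraph V) [DecidableRel G.Adj] (k : V)
    (f : Perm V → ℝ) :
    lump k (interchangeGen G *ᵥ f) = -(G.lapMatrix ℝ *ᵥ lump k f) := by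
  ext j
  calc lump k (interchangeGen G *ᵥ f) j
      = (∑ p : V × V with G.Adj p.1 p.2,
          (lump k (fun σ => f (σ * swap p.1 p.2)) j - lump k f j)) / 2 := by
        simp only [lump, interchangeGen_mulVec_apply, ← Finset.sum_div, Finset.sum_sub_distrib]
        congr 2 <;> exact Finset.sum_comm
    _ = -(G.lapMatrix ℝ *ᵥ lump k f) j := by
        simp only [lump_mul_swap, G.sum_adj_swap_apply_sub_eq_lapMatrix_mulVec]
        ring

end Equiv.Perm

theorem stmt13_general (n : ℕ) (G : SimpleGraph (Fin n))
    (f : Equiv.Perm (Fin n) → ℝ) (lam : ℝ) (hlam : 0 < lam)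
    (hf : (interchangeGen G).mulVec f = (-lam) • f)
    (m k : Fin n)
    (hne : ∑ σ ∈ univ.filter (fun σ : Equiv.Perm (Fin n) => σ m = k), f σ ≠ 0) :
    (∃ h : Fin n → ℝ, h ≠ 0 ∧
      (letI := Classical.decRel G.Adj; (G.lapMatrix ℝ).mulVec h) = lam • h) ∧
    lapGap G ≤ lam := by
  let := Classical.decRel G.Adj
  set h := Equiv.Perm.lump k f
  have h_ne_zero : h ≠ 0 := fun h0 => hne (congrFun h0 m)
  have h_eigen : G.lapMatrix ℝ *ᵥ h = lam • h := by
    rw [← neg_neg (G.lapMatrix ℝ *ᵥ h), ← Equiv.Perm.lump_interchangeGen_mulVec, hf,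
      Equiv.Perm.lump_smul, neg_smul, neg_neg]
  exact ⟨⟨h, h_ne_zero, h_eigen⟩, csInf_le ⟨0, fun μ hμ => hμ.1.le⟩ ⟨hlam, h, h_ne_zero, h_eigen⟩⟩

theorem stmt13 (n : ℕ) (G : SimpleGraph (Fin n)) (hG : G.Connected)
    (f : Equiv.Perm (Fin n) → ℝ) (lam : ℝ) (hlam : 0 < lam)
    (hf : (interchangeGen G).mulVec f = (-lam) • f)
    (m k : Fin n)
    (hne : ∑ σ ∈ univ.filter (fun σ : Equiv.Perm (Fin n) => σ m = k), f σ ≠ 0) :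
    (∃ h : Fin n → ℝ, h ≠ 0 ∧
      (letI := Classical.decRel G.Adj; (G.lapMatrix ℝ).mulVec h) = lam • h) ∧
    lapGap G ≤ lam :=
  stmt13_general n G f lam hlam hf m k hne
end
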